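/- arXiv:2404.00116 — 3 statements merged into one kernel-verified Lean document; each statement's English description precedes it below -/
import Mathlib

section
/- Quantitative bound on α for two different connections (Lemma A.2): Let f_l, f_r be uniformly convex C² fluxes as in the context and let (A,B) and (A',B') be connections. For any two pairs (u_l,u_r), (v_l,v_r) ∈ ℝ² satisfying I^{AB}(u_l,u_r) ≤ 0, I^{A'B'}(v_l,v_r) ≤ 0, f_l(u_l) = f_r(u_r) and f_l(v_l) = f_r(v_r), one has α(u_l,u_r,v_l,v_r) ≤ 2·|f_r(B') − f_r(B)|. -/
/-!
Using the Rankine–Hugoniot conditions `f_l(u_l) = f_r(u_r)` and `f_l(v_l) = f_r(v_r)`,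
`α = (sgn(u_r − v_r) − sgn(u_l − v_l)) (f_r(u_r) − f_r(v_r))`, which vanishes unless the two
states cross, say `u_l < v_l` and `v_r < u_r`; then `α = 2 (f_r(u_r) − f_r(v_r))`.
The entropy condition `I^{AB}(u_l, u_r) ≤ 0` always gives `f_r(B) ≤ f_r(u_r)`, and gives
`f_r(u_r) ≤ f_r(B)` once `u_l ≤ θ_l` and `θ_r ≤ u_r`. By monotonicity of the fluxes on either
side of their minima, a crossing with `f_r(u_r) > f_r(v_r)` forces exactly that, so
`α ≤ 2 (f_r(B) − f_r(B'))`.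
-/

noncomputable section

/-- The interface entropy functional
`I^{AB}(u_l,u_r) = sgn(u_r - B)(f_r(u_r) - f_r(B)) - sgn(u_l - A)(f_l(u_l) - f_l(A))`. -/
def IAB (fl fr : ℝ → ℝ) (A B ul ur : ℝ) : ℝ :=
  Real.sign (ur - B) * (fr ur - fr B) - Real.sign (ul - A) * (fl ul - fl A)

/-- The Kruzhkov interface functional
`α(u_l,u_r,v_l,v_r) = sgn(u_r - v_r)(f_r(u_r) - f_r(v_r)) - sgn(u_l - v_l)(f_l(u_l) - f_l(v_l))`. -/
def alphaFn (fl fr : ℝ → ℝ) (ul ur vl vr : ℝ) : ℝ :=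
  Real.sign (ur - vr) * (fr ur - fr vr) - Real.sign (ul - vl) * (fl ul - fl vl)

open Set

theorem strictMonoOn_Ici_of_strictMono_deriv {f : ℝ → ℝ} {θ : ℝ} (hf : Continuous f)
    (hf' : StrictMono (deriv f)) (hθ : deriv f θ = 0) : StrictMonoOn f (Ici θ) :=
  strictMonoOn_of_deriv_pos (convex_Ici θ) hf.continuousOn fun x hx => by
    rw [interior_Ici] at hx
    exact hθ ▸ hf' hx

theorem strictAntiOn_Iic_of_strictMono_deriv {f : ℝ → ℝ} {θ : ℝ} (hf : Continuous f)
    (hf' : StrictMono (deriv f)) (hθ : deriv f θ = 0) : StrictAntiOn f (Iic θ) :=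
  strictAntiOn_of_deriv_neg (convex_Iic θ) hf.continuousOn fun x hx => by
    rw [interior_Iic] at hx
    exact hθ ▸ hf' hx

section Connection

variable {fl fr : ℝ → ℝ} {θl θr A B ul ur vl vr : ℝ}

theorem flux_connection_le_of_IAB_nonpos (hl_anti : StrictAntiOn fl (Iic θl))
    (hr_mono : StrictMonoOn fr (Ici θr)) (hAB : fl A = fr B) (hA : A ≤ θl) (hB : θr ≤ B)
    (hRH : fl ul = fr ur) (hI : IAB fl fr A B ul ur ≤ 0) : fr B ≤ fr ur := by
  by_contra! hlt
  have hur : ur < B := lt_of_not_ge fun h => hlt.not_ge (hr_mono.monotoneOn hB (hB.trans h) h)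
  have hul : A < ul := lt_of_not_ge fun h =>
    hlt.not_ge (hAB ▸ hRH ▸ hl_anti.antitoneOn (h.trans hA) hA h)
  rw [IAB, Real.sign_of_neg (sub_neg.2 hur), Real.sign_of_pos (sub_pos.2 hul), hRH, hAB] at hI
  linarith

theorem flux_le_connection_of_IAB_nonpos (hl_anti : StrictAntiOn fl (Iic θl))
    (hr_mono : StrictMonoOn fr (Ici θr)) (hAB : fl A = fr B) (hA : A ≤ θl) (hB : θr ≤ B)
    (hul : ul ≤ θl) (hur : θr ≤ ur) (hRH : fl ul = fr ur) (hI : IAB fl fr A B ul ur ≤ 0) :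
    fr ur ≤ fr B := by
  by_contra! hlt
  have hBur : B < ur := lt_of_not_ge fun h => hlt.not_ge (hr_mono.monotoneOn hur hB h)
  have hulA : ul < A := lt_of_not_ge fun h =>
    hlt.not_ge (hAB ▸ hRH ▸ hl_anti.antitoneOn hA hul h)
  rw [IAB, Real.sign_of_pos (sub_pos.2 hBur), Real.sign_of_neg (sub_neg.2 hulA), hRH, hAB] at hI
  linarith

theorem mem_branches_of_crossing (hl_mono : StrictMonoOn fl (Ici θl))
    (hr_anti : StrictAntiOn fr (Iic θr)) (hRHu : fl ul = fr ur) (hRHv : fl vl = fr vr)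
    (hl : ul < vl) (hr : vr < ur) (hflux : fr vr < fr ur) : ul ≤ θl ∧ θr ≤ ur := by
  constructor
  · by_contra! h
    have := hl_mono h.le (h.trans hl).le hl
    rw [hRHu, hRHv] at this
    linarith
  · by_contra! h
    linarith [hr_anti (hr.trans h).le h.le hr]

end Connection

section Alpha

variable {fl fr : ℝ → ℝ} {ul ur vl vr : ℝ}

theorem alphaFn_comm : alphaFn fl fr ul ur vl vr = alphaFn fl fr vl vr ul ur := by
  simp only [alphaFn, ← neg_sub ul, ← neg_sub ur, Real.sign_neg]
  ring

theorem alphaFn_eq_of_flux_eq (hRHu : fl ul = fr ur) (hRHv : fl vl = fr vr) :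
    alphaFn fl fr ul ur vl vr = (Real.sign (ur - vr) - Real.sign (ul - vl)) * (fr ur - fr vr) := by
  rw [alphaFn, hRHu, hRHv]
  ring

theorem alphaFn_eq_zero_of_mul_nonneg (hRHu : fl ul = fr ur) (hRHv : fl vl = fr vr)
    (h : 0 ≤ (ul - vl) * (ur - vr)) : alphaFn fl fr ul ur vl vr = 0 := by
  rw [alphaFn_eq_of_flux_eq hRHu hRHv]
  rcases eq_or_ne ul vl with rfl | hl
  · rw [← hRHu, ← hRHv, sub_self (fl ul), mul_zero]
  rcases eq_or_ne ur vr with rfl | hr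
  · rw [sub_self (fr ur), mul_zero]
  have hpos : 0 < (ul - vl) * (ur - vr) :=
    h.lt_of_ne (mul_ne_zero (sub_ne_zero.2 hl) (sub_ne_zero.2 hr)).symm
  rcases mul_pos_iff.1 hpos with ⟨hl, hr⟩ | ⟨hl, hr⟩
  · rw [Real.sign_of_pos hl, Real.sign_of_pos hr, sub_self, zero_mul]
  · rw [Real.sign_of_neg hl, Real.sign_of_neg hr, sub_self, zero_mul]

theorem alphaFn_le_of_crossing {θl θr A B A' B' : ℝ}
    (hl_anti : StrictAntiOn fl (Iic θl)) (hl_mono : StrictMonoOn fl (Ici θl))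
    (hr_anti : StrictAntiOn fr (Iic θr)) (hr_mono : StrictMonoOn fr (Ici θr))
    (hAB : fl A = fr B) (hA : A ≤ θl) (hB : θr ≤ B)
    (hAB' : fl A' = fr B') (hA' : A' ≤ θl) (hB' : θr ≤ B')
    (hIu : IAB fl fr A B ul ur ≤ 0) (hIv : IAB fl fr A' B' vl vr ≤ 0)
    (hRHu : fl ul = fr ur) (hRHv : fl vl = fr vr) (hl : ul < vl) (hr : vr < ur) :
    alphaFn fl fr ul ur vl vr ≤ 2 * |fr B - fr B'| := by
  rw [alphaFn_eq_of_flux_eq hRHu hRHv, Real.sign_of_pos (sub_pos.2 hr),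
    Real.sign_of_neg (sub_neg.2 hl)]
  rcases le_or_gt (fr ur) (fr vr) with hflux | hflux
  · linarith [abs_nonneg (fr B - fr B')]
  obtain ⟨hul, hur⟩ := mem_branches_of_crossing hl_mono hr_anti hRHu hRHv hl hr hflux
  have hu := flux_le_connection_of_IAB_nonpos hl_anti hr_mono hAB hA hB hul hur hRHu hIu
  have hv := flux_connection_le_of_IAB_nonpos hl_anti hr_mono hAB' hA' hB' hRHv hIv
  linarith [le_abs_self (fr B - fr B')]

end Alpha

/-- **Lemma A.2**: quantitative bound on `α` for two different connections. -/
theorem alpha_bound_two_connections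
    (fl fr : ℝ → ℝ) (a : ℝ) (ha : 0 < a)
    (hfl : ContDiff ℝ 2 fl) (hfr : ContDiff ℝ 2 fr)
    (hfl2 : ∀ u : ℝ, a ≤ deriv (deriv fl) u) (hfr2 : ∀ u : ℝ, a ≤ deriv (deriv fr) u)
    (θl θr : ℝ) (hθl : deriv fl θl = 0) (hθr : deriv fr θr = 0)
    (A B : ℝ) (hAB : fl A = fr B) (hA : A ≤ θl) (hB : θr ≤ B)
    (A' B' : ℝ) (hAB' : fl A' = fr B') (hA' : A' ≤ θl) (hB' : θr ≤ B')
    (ul ur vl vr : ℝ)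
    (hIu : IAB fl fr A B ul ur ≤ 0) (hIv : IAB fl fr A' B' vl vr ≤ 0)
    (hRHu : fl ul = fr ur) (hRHv : fl vl = fr vr) :
    alphaFn fl fr ul ur vl vr ≤ 2 * |fr B' - fr B| := by
  have hl' : StrictMono (deriv fl) := strictMono_of_deriv_pos fun u => ha.trans_le (hfl2 u)
  have hr' : StrictMono (deriv fr) := strictMono_of_deriv_pos fun u => ha.trans_le (hfr2 u)
  have hl_anti := strictAntiOn_Iic_of_strictMono_deriv hfl.continuous hl' hθl
  have hl_mono := strictMonoOn_Ici_of_strictMono_deriv hfl.continuous hl' hθl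
  have hr_anti := strictAntiOn_Iic_of_strictMono_deriv hfr.continuous hr' hθr
  have hr_mono := strictMonoOn_Ici_of_strictMono_deriv hfr.continuous hr' hθr
  rcases le_or_gt 0 ((ul - vl) * (ur - vr)) with h | h
  · rw [alphaFn_eq_zero_of_mul_nonneg hRHu hRHv h]
    positivity
  rcases mul_neg_iff.1 h with ⟨hl, hr⟩ | ⟨hl, hr⟩
  · rw [alphaFn_comm]
    exact alphaFn_le_of_crossing hl_anti hl_mono hr_anti hr_mono hAB' hA' hB' hAB hA hB
      hIv hIu hRHv hRHu (sub_pos.1 hl) (sub_neg.1 hr)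
  · rw [abs_sub_comm]
    exact alphaFn_le_of_crossing hl_anti hl_mono hr_anti hr_mono hAB hA hB hAB' hA' hB'
      hIu hIv hRHu hRHv (sub_neg.1 hl) (sub_pos.1 hr)
end
end

section
/- Duality of backward shocks, second identity (Lemma 3.1, second equality of (3.14)): Let f, θ, T be as in the context, let A < θ and L ∈ (T·f'(A), 0), and let x : [L/f'(A), T] → ℝ be a solution of the right backward-shock Cauchy problem with data (L,A). Set R := x(T) (which lies in (0, T·f'(Ā))) and t₀ := R/f'(Ā) ∈ (0,T). Note that Ā > θ, that (for B := Ā) the point B̄ equals A, and that R ∈ (0, T·f'(Ā)), so the left backward-shock Cauchy problem with data (R, Ā) makes sense: it asks for y : [t₀,T] → ℝ with y(t₀) = 0 and y'(t) = λ((f')⁻¹((y(t)+R)/t), A). Then every solution y of this problem satisfies y(T) = L. -/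
noncomputable section

open Set Filter

/-- The Rankine–Hugoniot speed `λ(u,v) = (f(v) - f(u)) / (v - u)`. -/
def lamF (f : ℝ → ℝ) (u v : ℝ) : ℝ := (f v - f u) / (v - u)

/-- `y` solves the left backward-shock Cauchy problem with data `(R, B)` on
`[R / f'(B), T]`:  `y(R/f'(B)) = 0` and `y'(t) = λ((f')⁻¹((y(t)+R)/t), B̄)`.
Here `finv` denotes the inverse of `deriv f`. -/
def LeftShockSol (f finv : ℝ → ℝ) (T B Bbar R : ℝ) (y : ℝ → ℝ) : Prop :=
  y (R / deriv f B) = 0 ∧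
  ∀ t ∈ Icc (R / deriv f B) T,
    HasDerivWithinAt y (lamF f (finv ((y t + R) / t)) Bbar) (Icc (R / deriv f B) T) t

/-- `x` solves the right backward-shock Cauchy problem with data `(L, A)` on
`[L / f'(A), T]`:  `x(L/f'(A)) = 0` and `x'(t) = λ((f')⁻¹((x(t)+L)/t), Ā)`.
Here `finv` denotes the inverse of `deriv f`. -/
def RightShockSol (f finv : ℝ → ℝ) (T A Abar L : ℝ) (x : ℝ → ℝ) : Prop :=
  x (L / deriv f A) = 0 ∧
  ∀ t ∈ Icc (L / deriv f A) T,
    HasDerivWithinAt x (lamF f (finv ((x t + L) / t)) Abar) (Icc (L / deriv f A) T) t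


/-!
Along a solution `z` of the shock equation with data `(K, B)` write `u(t) = (f')⁻¹((z t + K) / t)`
for the characteristic value behind the shock. The quantity
`Φ(t) = t (f(B̄) - f(u)) - (B̄ - u)(z t + K)` is conserved: differentiating, the terms in `u'`
cancel because `t f'(u) = z t + K`, and the rest vanishes because `(B̄ - u) λ(u, B̄) = f(B̄) - f(u)`.
At the starting time `Φ = (B - B̄) K`, while at time `t` it equals `t D(B̄, u(t))` for the Bregman
divergence `D(c, u) = f(c) - f(u) - f'(u)(c - u)`.

For `x` (data `(L, A)`) and `y` (data `(R, Ā)`, `R = x(T)`) this gives, using `f(Ā) = f(A)` and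
`T f'(u_x(T)) = R + L`, that `T D(A, u_x(T)) = (Ā - A) R = T D(A, u_y(T))`. Both values lie in
`(A, ∞)`, where `D(A, ·)` is strictly increasing since `∂ᵤD(A, u) = f''(u)(u - A)`; hence
`u_x(T) = u_y(T)`, i.e. `(R + L) / T = (y(T) + R) / T`.
-/

lemma sub_mul_lamF (f : ℝ → ℝ) (u c : ℝ) : (c - u) * lamF f u c = f c - f u := by
  rcases eq_or_ne c u with rfl | hcu
  · simp
  · rw [lamF, mul_div_cancel₀ _ (sub_ne_zero.mpr hcu)]

lemma differentiable_inverse_of_deriv_pos {g h : ℝ → ℝ} (hg : Differentiable ℝ g)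
    (hg' : ∀ x, 0 < deriv g x) (hgh : ∀ p, g (h p) = p) (hhg : ∀ x, h (g x) = x) :
    Differentiable ℝ h := by
  have hmono : StrictMono h := fun p q hpq => by
    rw [← hgh p, ← hgh q] at hpq
    exact (strictMono_of_deriv_pos hg').lt_iff_lt.mp hpq
  have hcont : Continuous h :=
    hmono.monotone.continuous_of_surjective fun x => ⟨g x, hhg x⟩
  exact fun p => (HasDerivAt.of_local_left_inverse hcont.continuousAt (hg (h p)).hasDerivAt
    (hg' _).ne' (Eventually.of_forall hgh)).differentiableAt

def bregman (f : ℝ → ℝ) (c u : ℝ) : ℝ := f c - f u - deriv f u * (c - u)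

lemma bregman_eq_of_eq {f : ℝ → ℝ} {c c' : ℝ} (h : f c = f c') (u : ℝ) :
    bregman f c u = bregman f c' u + deriv f u * (c' - c) := by
  rw [bregman, bregman, h]
  ring

lemma hasDerivAt_bregman {f : ℝ → ℝ} (hf : ContDiff ℝ 2 f) (c v : ℝ) :
    HasDerivAt (bregman f c) (deriv (deriv f) v * (v - c)) v := by
  have hd := ((hf.differentiable (by norm_num)) v).hasDerivAt
  have hd2 := (hf.differentiable_deriv_two v).hasDerivAt
  refine (((hasDerivAt_const v (f c)).sub hd).sub
    (hd2.mul ((hasDerivAt_id' v).const_sub c))).congr_deriv ?_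
  ring

lemma strictMonoOn_bregman {f : ℝ → ℝ} (hf : ContDiff ℝ 2 f) (hf'' : ∀ u, 0 < deriv (deriv f) u)
    (c : ℝ) : StrictMonoOn (bregman f c) (Ici c) := by
  refine strictMonoOn_of_deriv_pos (convex_Ici c)
    (fun v _ => (hasDerivAt_bregman hf c v).continuousAt.continuousWithinAt) fun v hv => ?_
  rw [interior_Ici] at hv
  rw [(hasDerivAt_bregman hf c v).deriv]
  exact mul_pos (hf'' v) (sub_pos.mpr hv)

def shockInvariant (f finv : ℝ → ℝ) (c K : ℝ) (z : ℝ → ℝ) (t : ℝ) : ℝ :=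
  t * (f c - f (finv ((z t + K) / t))) - (c - finv ((z t + K) / t)) * (z t + K)

section ShockInvariant

variable {f finv : ℝ → ℝ}

lemma shockInvariant_eq_mul_bregman (hfinv : ∀ p, deriv f (finv p) = p) (c K : ℝ) (z : ℝ → ℝ)
    {t : ℝ} (ht : t ≠ 0) :
    shockInvariant f finv c K z t = t * bregman f c (finv ((z t + K) / t)) := by
  rw [shockInvariant, bregman, hfinv]
  field_simp

lemma hasDerivWithinAt_shockInvariant (hf : Differentiable ℝ f) (hfinvd : Differentiable ℝ finv)
    (hfinv : ∀ p, deriv f (finv p) = p) {c K t : ℝ} {z : ℝ → ℝ} {s : Set ℝ} (ht : t ≠ 0)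
    (hz : HasDerivWithinAt z (lamF f (finv ((z t + K) / t)) c) s t) :
    HasDerivWithinAt (shockInvariant f finv c K z) 0 s t := by
  set u := finv ((z t + K) / t)
  obtain ⟨u', hu⟩ : ∃ u', HasDerivWithinAt (fun r => finv ((z r + K) / r)) u' s t :=
    ⟨_, (hfinvd _).hasDerivAt.comp_hasDerivWithinAt t
      ((hz.add_const K).div (hasDerivWithinAt_id t s) ht)⟩
  have hfu : HasDerivWithinAt (fun r => f (finv ((z r + K) / r))) (deriv f u * u') s t :=
    (hf u).hasDerivAt.comp_hasDerivWithinAt t hu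
  have hslope : t * deriv f u = z t + K := by rw [hfinv]; field_simp
  refine (((hasDerivWithinAt_id t s).mul (hfu.const_sub (f c))).sub
    ((hu.const_sub c).mul (hz.add_const K))).congr_deriv ?_
  rw [id, sub_mul_lamF]
  linear_combination (-u') * hslope

end ShockInvariant

namespace LeftShockSol

variable {f finv y : ℝ → ℝ} {T B Bbar K : ℝ}

lemma slope_at_start (hy : LeftShockSol f finv T B Bbar K y) (hs : 0 < K / deriv f B) :
    (y (K / deriv f B) + K) / (K / deriv f B) = deriv f B := by
  have hK : K ≠ 0 := by rintro rfl; simp at hs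
  have hdB : deriv f B ≠ 0 := by rintro h; simp [h] at hs
  rw [hy.1, zero_add]
  field_simp

lemma shockInvariant_eq (hy : LeftShockSol f finv T B Bbar K y) (hf : Differentiable ℝ f)
    (hfinvd : Differentiable ℝ finv) (hfinv1 : ∀ u, finv (deriv f u) = u)
    (hfinv2 : ∀ p, deriv f (finv p) = p) (hBbar : f Bbar = f B) (hs : 0 < K / deriv f B) :
    ∀ t ∈ Icc (K / deriv f B) T, shockInvariant f finv Bbar K y t = (B - Bbar) * K := by
  have hderiv : ∀ t ∈ Icc (K / deriv f B) T,
      HasDerivWithinAt (shockInvariant f finv Bbar K y) 0 (Icc (K / deriv f B) T) t :=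
    fun t ht => hasDerivWithinAt_shockInvariant hf hfinvd hfinv2 (hs.trans_le ht.1).ne' (hy.2 t ht)
  have hconst := constant_of_has_deriv_right_zero (fun t ht => (hderiv t ht).continuousWithinAt)
    fun t ht => (hderiv t (Ico_subset_Icc_self ht)).mono_of_mem_nhdsWithin
      (Icc_mem_nhdsGE_of_mem ht)
  intro t ht
  rw [hconst t ht, shockInvariant, hy.slope_at_start hs, hfinv1, hy.1, hBbar]
  ring

lemma mul_bregman_eq (hy : LeftShockSol f finv T B Bbar K y) (hf : Differentiable ℝ f)
    (hfinvd : Differentiable ℝ finv) (hfinv1 : ∀ u, finv (deriv f u) = u)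
    (hfinv2 : ∀ p, deriv f (finv p) = p) (hBbar : f Bbar = f B) (hs : 0 < K / deriv f B)
    {t : ℝ} (ht : t ∈ Icc (K / deriv f B) T) :
    t * bregman f Bbar (finv ((y t + K) / t)) = (B - Bbar) * K := by
  rw [← shockInvariant_eq_mul_bregman hfinv2 _ _ _ (hs.trans_le ht.1).ne']
  exact hy.shockInvariant_eq hf hfinvd hfinv1 hfinv2 hBbar hs t ht

-- The invariant vanishes where the characteristic value equals `B̄`, so by the intermediate value
-- theorem that value stays on the side of `B`.
lemma lt_finv_of_lt (hy : LeftShockSol f finv T B Bbar K y) (hf : Differentiable ℝ f)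
    (hfinvd : Differentiable ℝ finv) (hfinv1 : ∀ u, finv (deriv f u) = u)
    (hfinv2 : ∀ p, deriv f (finv p) = p) (hBbar : f Bbar = f B) (hs : 0 < K / deriv f B)
    (hBB : Bbar < B) :
    ∀ t ∈ Icc (K / deriv f B) T, Bbar < finv ((y t + K) / t) := by
  have hne : ∀ t ∈ Icc (K / deriv f B) T, finv ((y t + K) / t) ≠ Bbar := by
    intro t ht hu
    have h := hy.shockInvariant_eq hf hfinvd hfinv1 hfinv2 hBbar hs t ht
    rw [shockInvariant, hu] at h
    have hK : K ≠ 0 := by rintro rfl; simp at hs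
    exact mul_ne_zero (sub_ne_zero.mpr hBB.ne') hK (by linear_combination -h)
  have hycont : ContinuousOn y (Icc (K / deriv f B) T) := fun t ht =>
    (hy.2 t ht).continuousWithinAt
  have hcont : ContinuousOn (fun t => finv ((y t + K) / t)) (Icc (K / deriv f B) T) :=
    hfinvd.continuous.comp_continuousOn ((hycont.add continuousOn_const).div continuousOn_id
      fun t ht => (hs.trans_le ht.1).ne')
  intro t ht
  by_contra! hle
  obtain ⟨r, hr, hrBbar⟩ := isPreconnected_Icc.intermediate_value ht
    (left_mem_Icc.mpr (ht.1.trans ht.2)) hcont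
    ⟨hle, by rw [hy.slope_at_start hs, hfinv1]; exact hBB.le⟩
  exact hne r hr hrBbar

end LeftShockSol

theorem backward_shock_duality_second_general
    (f : ℝ → ℝ) (a : ℝ) (ha : 0 < a) (hf : ContDiff ℝ 2 f)
    (hf2 : ∀ u : ℝ, a ≤ deriv (deriv f) u)
    (finv : ℝ → ℝ) (hfinv1 : ∀ u : ℝ, finv (deriv f u) = u)
    (hfinv2 : ∀ p : ℝ, deriv f (finv p) = p)
    (T : ℝ) (hT : 0 < T)
    (A Abar : ℝ) (hAbar2 : f Abar = f A)
    (L : ℝ) (hL : L ∈ Ioo (T * deriv f A) (0:ℝ))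
    (x : ℝ → ℝ) (hx : RightShockSol f finv T A Abar L x)
    (hxT : x T ∈ Ioo (0:ℝ) (T * deriv f Abar))
    (y : ℝ → ℝ) (hy : LeftShockSol f finv T Abar A (x T) y) :
    y T = L := by
  have hf'' : ∀ u, 0 < deriv (deriv f) u := fun u => ha.trans_le (hf2 u)
  have hf' : StrictMono (deriv f) := strictMono_of_deriv_pos hf''
  have hfd : Differentiable ℝ f := hf.differentiable (by norm_num)
  have hfinvd : Differentiable ℝ finv :=
    differentiable_inverse_of_deriv_pos hf.differentiable_deriv_two hf'' hfinv2 hfinv1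
  have hdA : deriv f A < 0 := neg_of_mul_neg_right (hL.1.trans hL.2) hT.le
  have hdAbar : 0 < deriv f Abar := pos_of_mul_pos_right (hxT.1.trans hxT.2) hT.le
  have hTx : T ∈ Icc (L / deriv f A) T := ⟨(div_le_iff_of_neg hdA).mpr hL.1.le, le_rfl⟩
  have hTy : T ∈ Icc (x T / deriv f Abar) T := ⟨(div_le_iff₀ hdAbar).mpr hxT.2.le, le_rfl⟩
  set u := finv ((x T + L) / T)
  set v := finv ((y T + x T) / T)
  -- `RightShockSol` unfolds to `LeftShockSol`.
  have hxinv : T * bregman f Abar u = (A - Abar) * L :=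
    LeftShockSol.mul_bregman_eq hx hfd hfinvd hfinv1 hfinv2 hAbar2
      (div_pos_of_neg_of_neg hL.2 hdA) hTx
  have hyinv : T * bregman f A v = (Abar - A) * x T :=
    hy.mul_bregman_eq hfd hfinvd hfinv1 hfinv2 hAbar2.symm (div_pos hxT.1 hdAbar) hTy
  have hu : A < u := hf'.lt_iff_lt.mp (by rw [hfinv2, lt_div_iff₀ hT]; linarith [hL.1, hxT.1])
  have hv : A < v := hy.lt_finv_of_lt hfd hfinvd hfinv1 hfinv2 hAbar2.symm (div_pos hxT.1 hdAbar)
    (hf'.lt_iff_lt.mp (hdA.trans hdAbar)) T hTy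
  have hbregman : bregman f A u = bregman f A v := by
    have hTu : T * deriv f u = x T + L := by rw [hfinv2]; field_simp
    refine mul_left_cancel₀ hT.ne' ?_
    rw [bregman_eq_of_eq hAbar2.symm, hyinv]
    linear_combination hxinv + (Abar - A) * hTu
  have huv := congrArg (deriv f) ((strictMonoOn_bregman hf hf'' A).injOn hu.le hv.le hbregman)
  rw [hfinv2, hfinv2, div_left_inj' hT.ne'] at huv
  linarith

/-- **Lemma 3.1, second equality of (3.14)**: the left backward shock with data
`(x(T), Ā)` is dual to the right backward shock with data `(L, A)`. -/
theorem backward_shock_duality_second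
    (f : ℝ → ℝ) (a : ℝ) (ha : 0 < a) (hf : ContDiff ℝ 2 f)
    (hf2 : ∀ u : ℝ, a ≤ deriv (deriv f) u)
    (θ : ℝ) (hθ : deriv f θ = 0)
    (finv : ℝ → ℝ) (hfinv1 : ∀ u : ℝ, finv (deriv f u) = u)
    (hfinv2 : ∀ p : ℝ, deriv f (finv p) = p)
    (T : ℝ) (hT : 0 < T)
    (A Abar : ℝ) (hA : A < θ) (hAbar1 : θ ≤ Abar) (hAbar2 : f Abar = f A)
    (L : ℝ) (hL : L ∈ Ioo (T * deriv f A) (0:ℝ))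
    (x : ℝ → ℝ) (hx : RightShockSol f finv T A Abar L x)
    (hxT : x T ∈ Ioo (0:ℝ) (T * deriv f Abar))
    (y : ℝ → ℝ) (hy : LeftShockSol f finv T Abar A (x T) y) :
    y T = L :=
  backward_shock_duality_second_general f a ha hf hf2 finv hfinv1 hfinv2 T hT A Abar hAbar2 L hL x
    hx hxT y hy
end
end

section
/- One-sided limits of the terminal values of backward shocks (Lemma 3.1, equation (3.15)): Let f, θ, T be as in the context and fix B > θ. Let Y : (0, T·f'(B)) → ℝ be a function such that for each R ∈ (0, T·f'(B)), Y(R) = y_R(T) for some solution y_R of the left backward-shock Cauchy problem with data (R,B); and let X : (T·f'(B̄), 0) → ℝ be a function such that for each L ∈ (T·f'(B̄), 0), X(L) = x_L(T) for some solution x_L of the right backward-shock Cauchy problem with data (L, B̄) (whose ODE reads x'(t) = λ((f')⁻¹((x(t)+L)/t), B), since Ā = B when A = B̄). Then: Y(R) → T·f'(B̄) as R → 0⁺; Y(R) → 0 as R → T·f'(B)⁻; X(L) → T·f'(B) as L → 0⁻; and X(L) → 0 as L → T·f'(B̄)⁺. -/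
/-!
Along a left backward shock `y` with data `(R, B)`, the state `u` to its left is read off the
characteristic speed `g t = (y t + R) / t = f' u`, which solves `g' = (λ(u, B̄) - g) / t` with
`g t₀ = f'(B)` at `t₀ = R / f'(B)`. Strong convexity traps `f'(B̄) < g ≤ f'(B)`, so the shock
speed `λ(u, B̄)` lies in `[f'(B̄), 0]` and `f'(B̄) (T - t₀) ≤ y T ≤ 0`. It also gives
`(g - f'(B̄))' ≤ -c (g - f'(B̄)) / t`, hence `g T - f'(B̄) ≤ (f'(B) - f'(B̄)) (t₀ / T) ^ c`, and
`y T = T g T - R` tends to `T f'(B̄)` as `R → 0`. The reflection `u ↦ -u` turns right backward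
shocks into left ones, which gives the limits of `X`.
-/

noncomputable section

open Set Filter

open Topology

lemma lamF_comm (f : ℝ → ℝ) (u v : ℝ) : lamF f u v = lamF f v u := by
  rw [lamF, lamF, ← neg_sub v, ← neg_sub (f v), neg_div_neg_eq]

lemma lamF_eq_slope (f : ℝ → ℝ) (u v : ℝ) : lamF f u v = slope f u v := by
  rw [lamF, slope_def_field]

lemma lamF_comp_neg (f : ℝ → ℝ) (u v : ℝ) :
    lamF (fun w => f (-w)) (-u) (-v) = -lamF f u v := by
  rw [lamF, lamF, neg_neg, neg_neg, neg_sub_neg, ← neg_sub v u, div_neg]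

lemma HasDerivWithinAt.Ici_of_Icc {f : ℝ → ℝ} {f' a b x : ℝ}
    (h : HasDerivWithinAt f f' (Icc a b) x) (hx : x ∈ Ico a b) :
    HasDerivWithinAt f f' (Ici x) x :=
  h.mono_of_mem_nhdsWithin (Icc_mem_nhdsGE_of_mem hx)

section StrongConvexity

variable {f : ℝ → ℝ} {a : ℝ}

lemma strictMono_deriv_of_strongMono (ha : 0 < a)
    (hf' : ∀ u v, u ≤ v → a * (v - u) ≤ deriv f v - deriv f u) : StrictMono (deriv f) :=
  fun u v huv => by nlinarith [hf' u v huv.le, mul_pos ha (sub_pos.2 huv)]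

lemma lt_of_deriv_lt_deriv (ha : 0 < a)
    (hf' : ∀ u v, u ≤ v → a * (v - u) ≤ deriv f v - deriv f u) {u v : ℝ}
    (h : deriv f u < deriv f v) : u < v :=
  (strictMono_deriv_of_strongMono ha hf').lt_iff_lt.1 h

lemma hasDerivAt_sub_mul_sq {x : ℝ} (hf : DifferentiableAt ℝ f x) :
    HasDerivAt (fun x => f x - a / 2 * x ^ 2) (deriv f x - a * x) x :=
  (hf.hasDerivAt.sub ((hasDerivAt_pow 2 x).const_mul (a / 2))).congr_deriv (by push_cast; ring)

lemma slope_sub_mul_sq (f : ℝ → ℝ) (a : ℝ) {u v : ℝ} (huv : u ≠ v) :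
    slope (fun x => f x - a / 2 * x ^ 2) u v = lamF f u v - a / 2 * (u + v) := by
  rw [slope_def_field, lamF]
  field_simp [sub_ne_zero.2 huv.symm]
  ring

lemma convexOn_sub_mul_sq (hf : Differentiable ℝ f)
    (hf' : ∀ u v, u ≤ v → a * (v - u) ≤ deriv f v - deriv f u) :
    ConvexOn ℝ univ (fun x => f x - a / 2 * x ^ 2) := by
  refine Monotone.convexOn_univ_of_deriv (fun x => (hasDerivAt_sub_mul_sq (hf x)).differentiableAt)
    fun u v huv => ?_
  simp only [(hasDerivAt_sub_mul_sq (hf _)).deriv]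
  linarith [hf' u v huv]

lemma deriv_add_le_lamF (hf : Differentiable ℝ f)
    (hf' : ∀ u v, u ≤ v → a * (v - u) ≤ deriv f v - deriv f u) {w u : ℝ} (hwu : w < u) :
    deriv f w + a / 2 * (u - w) ≤ lamF f w u := by
  have h := (convexOn_sub_mul_sq hf hf').le_slope_of_hasDerivAt (mem_univ w) (mem_univ u) hwu
    (hasDerivAt_sub_mul_sq (hf w))
  rw [slope_sub_mul_sq f a hwu.ne] at h
  linarith

lemma lamF_le_deriv_sub (hf : Differentiable ℝ f)
    (hf' : ∀ u v, u ≤ v → a * (v - u) ≤ deriv f v - deriv f u) {w u : ℝ} (hwu : w < u) :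
    lamF f w u ≤ deriv f u - a / 2 * (u - w) := by
  have h := (convexOn_sub_mul_sq hf hf').slope_le_of_hasDerivAt (mem_univ w) (mem_univ u) hwu
    (hasDerivAt_sub_mul_sq (hf u))
  rw [slope_sub_mul_sq f a hwu.ne] at h
  linarith

lemma lamF_nonpos (hf : Differentiable ℝ f) (hmono : Monotone (deriv f)) {w u v : ℝ}
    (hwu : w < u) (huv : u ≤ v) (hfwv : f w = f v) : lamF f w u ≤ 0 := by
  rw [lamF_eq_slope]
  calc slope f w u ≤ slope f w v :=
        (Monotone.convexOn_univ_of_deriv hf hmono).slope_mono (mem_univ w)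
          ⟨mem_univ u, hwu.ne'⟩ ⟨mem_univ v, (hwu.trans_le huv).ne'⟩ huv
    _ = 0 := by rw [slope_def_field, hfwv, sub_self, zero_div]

lemma deriv_pos_of_lt_of_eq (hf : Differentiable ℝ f) (ha : 0 < a)
    (hf' : ∀ u v, u ≤ v → a * (v - u) ≤ deriv f v - deriv f u) {w u : ℝ} (hwu : w < u)
    (hfwu : f w = f u) : 0 < deriv f u := by
  have h := lamF_le_deriv_sub hf hf' hwu
  rw [lamF, hfwu, sub_self, zero_div] at h
  nlinarith

lemma lamF_sub_deriv_add_le (hf : Differentiable ℝ f) (ha : 0 ≤ a)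
    (hf' : ∀ u v, u ≤ v → a * (v - u) ≤ deriv f v - deriv f u) {w u M : ℝ} (hM : 0 < M)
    (hwu : w < u) (hlip : deriv f u - deriv f w ≤ M * (u - w)) :
    lamF f w u - deriv f u + a / (2 * M) * (deriv f u - deriv f w) ≤ 0 := by
  have h := lamF_le_deriv_sub hf hf' hwu
  have hM' : a / (2 * M) * (deriv f u - deriv f w) ≤ a / 2 * (u - w) :=
    calc a / (2 * M) * (deriv f u - deriv f w) ≤ a / (2 * M) * (M * (u - w)) := by gcongr
      _ = a / 2 * (u - w) := by field_simp
  linarith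

lemma ContDiff.exists_deriv_sub_le_mul (hf : ContDiff ℝ 2 f) (w v : ℝ) :
    ∃ M > 0, ∀ u ∈ Icc w v, deriv f u - deriv f w ≤ M * (u - w) := by
  obtain ⟨K, hK⟩ := (hf.deriv' (n := 1)).contDiffOn.exists_lipschitzOnWith one_ne_zero
    (convex_Icc w v) isCompact_Icc
  refine ⟨K + 1, by positivity, fun u hu => ?_⟩
  have hw : w ∈ Icc w v := left_mem_Icc.2 (hu.1.trans hu.2)
  have h := hK.dist_le_mul u hu w hw
  rw [Real.dist_eq, Real.dist_eq, abs_of_nonneg (sub_nonneg.2 hu.1)] at h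
  linarith [le_abs_self (deriv f u - deriv f w), sub_nonneg.2 hu.1]

end StrongConvexity

/-- The speed `(y t + R) / t` of the characteristic issued from `(-R, 0)` that meets the
shock at `(y t, t)`; the state `u` left of the shock is recovered as `(f')⁻¹` of it. -/
def charSpeed (y : ℝ → ℝ) (R t : ℝ) : ℝ := (y t + R) / t

lemma charSpeed_sub (y : ℝ → ℝ) (R c : ℝ) {t : ℝ} (ht : t ≠ 0) :
    charSpeed y R t - c = (y t + R - c * t) / t := by
  rw [charSpeed]
  field_simp

namespace LeftShockSol

variable {f finv y : ℝ → ℝ} {a T B Bbar R : ℝ}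

lemma continuousOn (hy : LeftShockSol f finv T B Bbar R y) :
    ContinuousOn y (Icc (R / deriv f B) T) :=
  fun t ht => (hy.2 t ht).continuousWithinAt

lemma continuousOn_charSpeed (hy : LeftShockSol f finv T B Bbar R y) (ht0 : 0 < R / deriv f B) :
    ContinuousOn (charSpeed y R) (Icc (R / deriv f B) T) :=
  (hy.continuousOn.add continuousOn_const).div continuousOn_id fun _ ht => (ht0.trans_le ht.1).ne'

lemma charSpeed_start (hy : LeftShockSol f finv T B Bbar R y) (ht0 : 0 < R / deriv f B) :
    charSpeed y R (R / deriv f B) = deriv f B := by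
  obtain ⟨hR, hp⟩ := div_ne_zero_iff.1 ht0.ne'
  rw [charSpeed, hy.1, zero_add]
  field_simp

lemma hasDerivWithinAt_charSpeed (hy : LeftShockSol f finv T B Bbar R y)
    (ht0 : 0 < R / deriv f B) {t : ℝ} (ht : t ∈ Icc (R / deriv f B) T) :
    HasDerivWithinAt (charSpeed y R)
      ((lamF f (finv (charSpeed y R t)) Bbar - charSpeed y R t) / t) (Icc (R / deriv f B) T) t := by
  have htne : t ≠ 0 := (ht0.trans_le ht.1).ne'
  refine (((hy.2 t ht).add_const R).div (hasDerivWithinAt_id t _) htne).congr_deriv ?_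
  simp only [charSpeed, id]
  field_simp

lemma lt_finv_charSpeed (ha : 0 < a) (hf' : ∀ u v, u ≤ v → a * (v - u) ≤ deriv f v - deriv f u)
    (hfinv : ∀ s, deriv f (finv s) = s) {t : ℝ} (ht : deriv f Bbar < charSpeed y R t) :
    Bbar < finv (charSpeed y R t) :=
  lt_of_deriv_lt_deriv ha hf' (by rwa [hfinv])

theorem charSpeed_le (hf : Differentiable ℝ f) (ha : 0 < a)
    (hf' : ∀ u v, u ≤ v → a * (v - u) ≤ deriv f v - deriv f u)
    (hfinv : ∀ s, deriv f (finv s) = s) (hqp : deriv f Bbar < deriv f B)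
    (hy : LeftShockSol f finv T B Bbar R y) (ht0 : 0 < R / deriv f B) :
    ∀ t ∈ Icc (R / deriv f B) T, charSpeed y R t ≤ deriv f B := by
  refine image_le_of_deriv_right_lt_deriv_boundary' (hy.continuousOn_charSpeed ht0)
    (fun t ht => (hy.hasDerivWithinAt_charSpeed ht0 (Ico_subset_Icc_self ht)).Ici_of_Icc ht)
    (hy.charSpeed_start ht0).le continuousOn_const (fun _ _ => hasDerivWithinAt_const _ _ _) ?_
  intro t ht hgt
  have hu : Bbar < finv (deriv f B) := lt_of_deriv_lt_deriv ha hf' (by rwa [hfinv])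
  have h := lamF_le_deriv_sub hf hf' hu
  rw [lamF_comm, hfinv] at h
  rw [hgt]
  exact div_neg_of_neg_of_pos (by nlinarith) (ht0.trans_le ht.1)

theorem deriv_lt_charSpeed (hf : Differentiable ℝ f) (ha : 0 < a)
    (hf' : ∀ u v, u ≤ v → a * (v - u) ≤ deriv f v - deriv f u)
    (hfinv : ∀ s, deriv f (finv s) = s) (hqp : deriv f Bbar < deriv f B)
    (hy : LeftShockSol f finv T B Bbar R y) (ht0 : 0 < R / deriv f B) :
    ∀ t ∈ Icc (R / deriv f B) T, deriv f Bbar < charSpeed y R t := by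
  set q := deriv f Bbar
  set t0 := R / deriv f B
  set z0 := t0 * (deriv f B - q) with hz0def
  have hz0 : 0 < z0 := mul_pos ht0 (sub_pos.2 hqp)
  have hR : R = t0 * deriv f B := (div_mul_cancel₀ R (div_ne_zero_iff.1 ht0.ne').2).symm
  -- `z t = y t + R - q t = t (charSpeed y R t - q)` increases wherever it is positive,
  -- so it never falls to `z0 / 2`.
  have hz : ∀ t ∈ Icc t0 T, z0 / 2 ≤ y t + R - q * t := by
    have hderiv : ∀ t ∈ Ico t0 T, HasDerivWithinAt (fun t => -(y t + R - q * t))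
        (-(lamF f (finv (charSpeed y R t)) Bbar - q)) (Ici t) t := fun t ht =>
      ((((hy.2 t (Ico_subset_Icc_self ht)).add_const R).sub
        ((hasDerivWithinAt_id t _).const_mul q)).neg.congr_deriv
          (by rw [mul_one]; rfl)).Ici_of_Icc ht
    have hbound : ∀ t ∈ Ico t0 T, -(y t + R - q * t) = -(z0 / 2) →
        -(lamF f (finv (charSpeed y R t)) Bbar - q) < 0 := by
      intro t ht hzt
      have htpos : 0 < t := ht0.trans_le ht.1
      have hgt : q < charSpeed y R t := by
        rw [← sub_pos, charSpeed_sub y R q htpos.ne', neg_inj.1 hzt]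
        positivity
      have hu := lt_finv_charSpeed ha hf' hfinv hgt
      have h := deriv_add_le_lamF hf hf' hu
      rw [← lamF_comm] at h
      nlinarith
    intro t ht
    have := image_le_of_deriv_right_lt_deriv_boundary' (f := fun t => -(y t + R - q * t))
      (B := fun _ => -(z0 / 2))
      ((hy.continuousOn.add continuousOn_const).sub (continuousOn_const.mul continuousOn_id)).neg
      hderiv (by simp only [hy.1]; linarith) continuousOn_const
      (fun _ _ => hasDerivWithinAt_const _ _ _) hbound ht
    linarith
  intro t ht
  have htpos : 0 < t := ht0.trans_le ht.1
  rw [← sub_pos, charSpeed_sub y R q htpos.ne']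
  exact div_pos (by linarith [hz t ht]) htpos

lemma finv_charSpeed_mem (hf : Differentiable ℝ f) (ha : 0 < a)
    (hf' : ∀ u v, u ≤ v → a * (v - u) ≤ deriv f v - deriv f u)
    (hfinv : ∀ s, deriv f (finv s) = s) (hqp : deriv f Bbar < deriv f B)
    (hy : LeftShockSol f finv T B Bbar R y) (ht0 : 0 < R / deriv f B) {t : ℝ}
    (ht : t ∈ Icc (R / deriv f B) T) : finv (charSpeed y R t) ∈ Ioc Bbar B :=
  ⟨lt_finv_charSpeed ha hf' hfinv (hy.deriv_lt_charSpeed hf ha hf' hfinv hqp ht0 t ht),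
    (strictMono_deriv_of_strongMono ha hf').le_iff_le.1
      (by rw [hfinv]; exact hy.charSpeed_le hf ha hf' hfinv hqp ht0 t ht)⟩

theorem terminal_mem (hf : Differentiable ℝ f) (ha : 0 < a)
    (hf' : ∀ u v, u ≤ v → a * (v - u) ≤ deriv f v - deriv f u)
    (hfinv : ∀ s, deriv f (finv s) = s) (hBB : Bbar < B) (hfB : f Bbar = f B)
    (hy : LeftShockSol f finv T B Bbar R y) (ht0 : 0 < R / deriv f B) (ht0T : R / deriv f B ≤ T) :
    y T ∈ Icc (deriv f Bbar * (T - R / deriv f B)) 0 := by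
  set t0 := R / deriv f B
  have hmono := strictMono_deriv_of_strongMono ha hf'
  have hqp := hmono hBB
  have hspeed : ∀ t ∈ Ico t0 T, deriv f Bbar ≤ lamF f (finv (charSpeed y R t)) Bbar ∧
      lamF f (finv (charSpeed y R t)) Bbar ≤ 0 := by
    intro t ht
    obtain ⟨hu, huB⟩ := hy.finv_charSpeed_mem hf ha hf' hfinv hqp ht0 (Ico_subset_Icc_self ht)
    rw [lamF_comm]
    exact ⟨by nlinarith [deriv_add_le_lamF hf hf' hu], lamF_nonpos hf hmono.monotone hu huB hfB⟩
  have hderiv : ∀ t ∈ Ico t0 T,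
      HasDerivWithinAt y (lamF f (finv (charSpeed y R t)) Bbar) (Ici t) t :=
    fun t ht => (hy.2 t (Ico_subset_Icc_self ht)).Ici_of_Icc ht
  have hT : T ∈ Icc t0 T := right_mem_Icc.2 ht0T
  constructor
  · refine image_le_of_deriv_right_le_deriv_boundary (f := fun t => deriv f Bbar * (t - t0))
      (continuousOn_const.mul (continuousOn_id.sub continuousOn_const))
      (fun t _ => (((hasDerivWithinAt_id t _).sub_const t0).const_mul _).congr_deriv (mul_one _))
      (by rw [hy.1, sub_self, mul_zero]) hy.continuousOn hderiv (fun t ht => (hspeed t ht).1) hT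
  · exact image_le_of_deriv_right_le_deriv_boundary (B := fun _ => 0) hy.continuousOn hderiv
      hy.1.le continuousOn_const (fun _ _ => hasDerivWithinAt_const _ _ _)
      (fun t ht => (hspeed t ht).2) hT

theorem charSpeed_sub_le (hf : Differentiable ℝ f) (ha : 0 < a)
    (hf' : ∀ u v, u ≤ v → a * (v - u) ≤ deriv f v - deriv f u)
    (hfinv : ∀ s, deriv f (finv s) = s) (hBB : Bbar < B)
    (hy : LeftShockSol f finv T B Bbar R y) (ht0 : 0 < R / deriv f B) (ht0T : R / deriv f B ≤ T)
    {M : ℝ} (hM : 0 < M) (hlip : ∀ u ∈ Icc Bbar B, deriv f u - deriv f Bbar ≤ M * (u - Bbar)) :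
    charSpeed y R T - deriv f Bbar ≤
      (deriv f B - deriv f Bbar) * (R / deriv f B / T) ^ (a / (2 * M)) := by
  set t0 := R / deriv f B
  set q := deriv f Bbar
  set c := a / (2 * M)
  set g := charSpeed y R
  have hqp : q < deriv f B := strictMono_deriv_of_strongMono ha hf' hBB
  have hG : ∀ t ∈ Icc t0 T, (g t - q) * t ^ c ≤ (g t0 - q) * t0 ^ c := by
    refine image_le_of_deriv_right_le_deriv_boundary (f := fun t => (g t - q) * t ^ c)
      (f' := fun t => (lamF f (finv (g t)) Bbar - g t) / t * t ^ c + (g t - q) * (c * t ^ (c - 1)))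
      (B := fun _ => (g t0 - q) * t0 ^ c) ?_ ?_ le_rfl continuousOn_const
      (fun _ _ => hasDerivWithinAt_const _ _ _) ?_
    · exact ((hy.continuousOn_charSpeed ht0).sub continuousOn_const).mul fun t ht =>
        (Real.continuousAt_rpow_const t c (Or.inl (ht0.trans_le ht.1).ne')).continuousWithinAt
    · intro t ht
      exact (((hy.hasDerivWithinAt_charSpeed ht0 (Ico_subset_Icc_self ht)).sub_const q).mul
        (Real.hasDerivAt_rpow_const (Or.inl (ht0.trans_le ht.1).ne')).hasDerivWithinAt).Ici_of_Icc
        ht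
    · intro t ht
      have htpos : 0 < t := ht0.trans_le ht.1
      obtain ⟨hu, huB⟩ := hy.finv_charSpeed_mem hf ha hf' hfinv hqp ht0 (Ico_subset_Icc_self ht)
      have h := lamF_sub_deriv_add_le hf ha.le hf' hM hu
        (by simpa only [hfinv] using hlip _ ⟨hu.le, huB⟩)
      rw [lamF_comm, hfinv] at h
      calc (lamF f (finv (g t)) Bbar - g t) / t * t ^ c + (g t - q) * (c * t ^ (c - 1))
          = (lamF f (finv (g t)) Bbar - g t + c * (g t - q)) * (t ^ c / t) := by
            rw [Real.rpow_sub_one htpos.ne']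
            ring
        _ ≤ 0 := mul_nonpos_of_nonpos_of_nonneg h (by positivity)
  have hT := hG T (right_mem_Icc.2 ht0T)
  rw [show g t0 = deriv f B from hy.charSpeed_start ht0] at hT
  rw [Real.div_rpow ht0.le (ht0.trans_le ht0T).le, mul_div_assoc',
    le_div_iff₀ (Real.rpow_pos_of_pos (ht0.trans_le ht0T) c)]
  exact hT

theorem exists_terminal_bounds (hf : ContDiff ℝ 2 f) (ha : 0 < a)
    (hf' : ∀ u v, u ≤ v → a * (v - u) ≤ deriv f v - deriv f u)
    (hfinv : ∀ s, deriv f (finv s) = s) (hBB : Bbar < B) (hfB : f Bbar = f B) :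
    ∃ c : ℝ, 0 < c ∧ ∀ R ∈ Ioo 0 (T * deriv f B), ∀ y, LeftShockSol f finv T B Bbar R y →
      deriv f Bbar * (T - R / deriv f B) ≤ y T ∧ y T ≤ 0 ∧
      y T ≤ T * deriv f Bbar - R + T * (deriv f B - deriv f Bbar) * (R / deriv f B / T) ^ c := by
  have hd := hf.differentiable two_ne_zero
  have hp := deriv_pos_of_lt_of_eq hd ha hf' hBB hfB
  obtain ⟨M, hM, hlip⟩ := hf.exists_deriv_sub_le_mul Bbar B
  refine ⟨a / (2 * M), by positivity, fun R hR y hy => ?_⟩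
  have ht0 : 0 < R / deriv f B := div_pos hR.1 hp
  have ht0T : R / deriv f B ≤ T := (div_le_iff₀ hp).2 hR.2.le
  have hT : 0 < T := ht0.trans_le ht0T
  have hg := hy.charSpeed_sub_le hd ha hf' hfinv hBB ht0 ht0T hM hlip
  have hyT : y T = T * charSpeed y R T - R := by
    rw [charSpeed]
    field_simp
    ring
  obtain ⟨hlo, hhi⟩ := hy.terminal_mem hd ha hf' hfinv hBB hfB ht0 ht0T
  refine ⟨hlo, hhi, ?_⟩
  rw [hyT]
  nlinarith [mul_le_mul_of_nonneg_left hg hT.le]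

end LeftShockSol

theorem tendsto_of_terminal_bounds {Y : ℝ → ℝ} {T p q c : ℝ} (hTp : 0 < T * p) (hc : 0 < c)
    (hY : ∀ R ∈ Ioo 0 (T * p), q * (T - R / p) ≤ Y R ∧ Y R ≤ 0 ∧
      Y R ≤ T * q - R + T * (p - q) * (R / p / T) ^ c) :
    Tendsto Y (𝓝[>] 0) (𝓝 (T * q)) ∧ Tendsto Y (𝓝[<] (T * p)) (𝓝 0) := by
  have hp : p ≠ 0 := right_ne_zero_of_mul hTp.ne'
  have hlo : Continuous fun R => q * (T - R / p) := by fun_prop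
  have hhi : ContinuousAt (fun R => T * q - R + T * (p - q) * (R / p / T) ^ c) 0 :=
    (continuousAt_const.sub continuousAt_id).add
      (continuousAt_const.mul (((continuousAt_id.div_const p).div_const T).rpow_const
        (Or.inr hc.le)))
  constructor
  · have hlo0 := hlo.tendsto 0
    have hhi0 := hhi.tendsto
    rw [zero_div, sub_zero, mul_comm] at hlo0
    simp only [zero_div, sub_zero, Real.zero_rpow hc.ne', mul_zero, add_zero] at hhi0
    refine tendsto_of_tendsto_of_tendsto_of_le_of_le' (hlo0.mono_left nhdsWithin_le_nhds)
      (hhi0.mono_left nhdsWithin_le_nhds) ?_ ?_ <;>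
    filter_upwards [Ioo_mem_nhdsGT hTp] with R hR
    exacts [(hY R hR).1, (hY R hR).2.2]
  · have hloT := hlo.tendsto (T * p)
    rw [mul_div_cancel_right₀ T hp, sub_self, mul_zero] at hloT
    refine tendsto_of_tendsto_of_tendsto_of_le_of_le' (hloT.mono_left nhdsWithin_le_nhds)
      tendsto_const_nhds ?_ ?_ <;>
    filter_upwards [Ioo_mem_nhdsLT hTp] with R hR
    exacts [(hY R hR).1, (hY R hR).2.1]

section Limits

variable {f finv : ℝ → ℝ} {a T B Bbar : ℝ}

theorem LeftShockSol.tendsto_terminal (hf : ContDiff ℝ 2 f) (ha : 0 < a)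
    (hf' : ∀ u v, u ≤ v → a * (v - u) ≤ deriv f v - deriv f u)
    (hfinv : ∀ s, deriv f (finv s) = s) (hT : 0 < T) (hBB : Bbar < B) (hfB : f Bbar = f B)
    {Y : ℝ → ℝ} (hY : ∀ R ∈ Ioo 0 (T * deriv f B),
      ∃ y, LeftShockSol f finv T B Bbar R y ∧ Y R = y T) :
    Tendsto Y (𝓝[>] 0) (𝓝 (T * deriv f Bbar)) ∧ Tendsto Y (𝓝[<] (T * deriv f B)) (𝓝 0) := by
  obtain ⟨c, hc, hbounds⟩ := LeftShockSol.exists_terminal_bounds hf ha hf' hfinv hBB hfB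
  have hp := deriv_pos_of_lt_of_eq (hf.differentiable two_ne_zero) ha hf' hBB hfB
  refine tendsto_of_terminal_bounds (mul_pos hT hp) hc fun R hR => ?_
  obtain ⟨y, hy, hYy⟩ := hY R hR
  rw [hYy]
  exact hbounds R hR y hy

theorem RightShockSol.neg {A Abar L : ℝ} {x : ℝ → ℝ} (hx : RightShockSol f finv T A Abar L x) :
    LeftShockSol (fun u => f (-u)) (fun s => -finv (-s)) T (-A) (-Abar) (-L) (fun t => -x t) := by
  have ht0 : -L / deriv (fun u => f (-u)) (-A) = L / deriv f A := by
    rw [deriv_comp_neg, neg_neg, neg_div_neg_eq]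
  refine ⟨by rw [ht0]; exact neg_eq_zero.2 hx.1, fun t ht => ?_⟩
  rw [ht0] at ht ⊢
  have hs : (-x t + -L) / t = -((x t + L) / t) := by ring
  simp only [hs, neg_neg]
  rw [lamF_comp_neg]
  exact (hx.2 t ht).neg

theorem RightShockSol.tendsto_terminal (hf : ContDiff ℝ 2 f) (ha : 0 < a)
    (hf' : ∀ u v, u ≤ v → a * (v - u) ≤ deriv f v - deriv f u)
    (hfinv : ∀ s, deriv f (finv s) = s) (hT : 0 < T) (hBB : Bbar < B) (hfB : f Bbar = f B)
    {X : ℝ → ℝ} (hX : ∀ L ∈ Ioo (T * deriv f Bbar) 0,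
      ∃ x, RightShockSol f finv T Bbar B L x ∧ X L = x T) :
    Tendsto X (𝓝[<] 0) (𝓝 (T * deriv f B)) ∧
      Tendsto X (𝓝[>] (T * deriv f Bbar)) (𝓝 0) := by
  have hdm : ∀ u, deriv (fun u => f (-u)) u = -deriv f (-u) := fun u => deriv_comp_neg f u
  have hlim := LeftShockSol.tendsto_terminal (f := fun u => f (-u)) (finv := fun s => -finv (-s))
    (B := -Bbar) (Bbar := -B) (Y := fun R => -X (-R)) (hf.comp contDiff_neg) ha
    (fun u v huv => by simp only [hdm]; linarith [hf' (-v) (-u) (neg_le_neg huv)])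
    (fun s => by simp only [hdm, neg_neg, hfinv]) hT (neg_lt_neg hBB) (by simp only [neg_neg, hfB])
    (fun R hR => by
      rw [hdm, neg_neg, mul_neg] at hR
      obtain ⟨x, hx, hXx⟩ := hX (-R) ⟨by linarith [hR.2], by linarith [hR.1]⟩
      exact ⟨_, by simpa only [neg_neg] using hx.neg, by rw [hXx]⟩)
  simp only [hdm, neg_neg, mul_neg] at hlim
  obtain ⟨hzero, hend⟩ := hlim
  constructor
  · have := (hzero.comp (neg_zero (G := ℝ) ▸ tendsto_neg_nhdsLT)).neg
    simp only [Function.comp_def, neg_neg] at this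
    exact this
  · have := (hend.comp tendsto_neg_nhdsGT).neg
    simp only [Function.comp_def, neg_neg, neg_zero] at this
    exact this

end Limits

theorem backward_shock_terminal_limits_general
    (f : ℝ → ℝ) (a : ℝ) (ha : 0 < a) (hf : ContDiff ℝ 2 f)
    (hf2 : ∀ u : ℝ, a ≤ deriv (deriv f) u)
    (θ : ℝ)
    (finv : ℝ → ℝ)
    (hfinv2 : ∀ p : ℝ, deriv f (finv p) = p)
    (T : ℝ) (hT : 0 < T)
    (B Bbar : ℝ) (hB : θ < B) (hBbar1 : Bbar ≤ θ) (hBbar2 : f Bbar = f B)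
    (Y X : ℝ → ℝ)
    (hY : ∀ R ∈ Ioo (0:ℝ) (T * deriv f B),
      ∃ y : ℝ → ℝ, LeftShockSol f finv T B Bbar R y ∧ Y R = y T)
    (hX : ∀ L ∈ Ioo (T * deriv f Bbar) (0:ℝ),
      ∃ x : ℝ → ℝ, RightShockSol f finv T Bbar B L x ∧ X L = x T) :
    Tendsto Y (nhdsWithin (0:ℝ) (Ioi 0)) (nhds (T * deriv f Bbar)) ∧
    Tendsto Y (nhdsWithin (T * deriv f B) (Iio (T * deriv f B))) (nhds 0) ∧
    Tendsto X (nhdsWithin (0:ℝ) (Iio 0)) (nhds (T * deriv f B)) ∧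
    Tendsto X (nhdsWithin (T * deriv f Bbar) (Ioi (T * deriv f Bbar))) (nhds 0) := by
  have hf' : ∀ u v, u ≤ v → a * (v - u) ≤ deriv f v - deriv f u :=
    mul_sub_le_image_sub_of_le_deriv ((hf.deriv' (n := 1)).differentiable one_ne_zero) hf2
  have hBB : Bbar < B := hBbar1.trans_lt hB
  obtain ⟨hY0, hYT⟩ := LeftShockSol.tendsto_terminal hf ha hf' hfinv2 hT hBB hBbar2 hY
  obtain ⟨hX0, hXT⟩ := RightShockSol.tendsto_terminal hf ha hf' hfinv2 hT hBB hBbar2 hX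
  exact ⟨hY0, hYT, hX0, hXT⟩

/-- **Lemma 3.1, equation (3.15)**: one-sided limits of the terminal values of the
backward shocks. -/
theorem backward_shock_terminal_limits
    (f : ℝ → ℝ) (a : ℝ) (ha : 0 < a) (hf : ContDiff ℝ 2 f)
    (hf2 : ∀ u : ℝ, a ≤ deriv (deriv f) u)
    (θ : ℝ) (hθ : deriv f θ = 0)
    (finv : ℝ → ℝ) (hfinv1 : ∀ u : ℝ, finv (deriv f u) = u)
    (hfinv2 : ∀ p : ℝ, deriv f (finv p) = p)
    (T : ℝ) (hT : 0 < T)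
    (B Bbar : ℝ) (hB : θ < B) (hBbar1 : Bbar ≤ θ) (hBbar2 : f Bbar = f B)
    (Y X : ℝ → ℝ)
    (hY : ∀ R ∈ Ioo (0:ℝ) (T * deriv f B),
      ∃ y : ℝ → ℝ, LeftShockSol f finv T B Bbar R y ∧ Y R = y T)
    (hX : ∀ L ∈ Ioo (T * deriv f Bbar) (0:ℝ),
      ∃ x : ℝ → ℝ, RightShockSol f finv T Bbar B L x ∧ X L = x T) :
    Tendsto Y (nhdsWithin (0:ℝ) (Ioi 0)) (nhds (T * deriv f Bbar)) ∧
    Tendsto Y (nhdsWithin (T * deriv f B) (Iio (T * deriv f B))) (nhds 0) ∧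
    Tendsto X (nhdsWithin (0:ℝ) (Iio 0)) (nhds (T * deriv f B)) ∧
    Tendsto X (nhdsWithin (T * deriv f Bbar) (Ioi (T * deriv f Bbar))) (nhds 0) :=
  backward_shock_terminal_limits_general f a ha hf hf2 θ finv hfinv2 T hT B Bbar hB hBbar1 hBbar2 Y
    X hY hX
end
end
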